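/- arXiv:1901.11331 — 10 statements merged into one kernel-verified Lean document; each statement's English description precedes it below -/
import Mathlib

section
/- Let E be a real inner product space and φ: E → ℝ a differentiable strictly convex function, with Bregman divergence d_φ(x, θ) = φ(x) − φ(θ) − ⟨x − θ, ∇φ(θ)⟩. Let f: [0, ∞) → ℝ be differentiable, monotone nondecreasing and concave. Let x_1, …, x_n ∈ E and θ ∈ E, set w_i = f'(d_φ(x_i, θ)) for each i, and suppose Σ_{i=1}^n w_i > 0. Define the updated center θ̃ = (Σ_{i=1}^n w_i x_i) / (Σ_{j=1}^n w_j). Then Σ_{i=1}^n f(d_φ(x_i, θ̃)) ≤ Σ_{i=1}^n f(d_φ(x_i, θ)); that is, the weighted-mean update of the cluster center monotonically decreases the f-separable objective. -/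
/-! The weighted-mean update is one step of a majorize–minimize scheme. Concavity of `f` bounds
`f ∘ d_φ(x_i, ·)` by its tangent line at the current divergence, so the objective at `θ̃` is at most
the objective at `θ` plus `Σ w_i (d_φ(x_i, θ̃) − d_φ(x_i, θ))`. The weighted mean `θ̃` minimises the
weighted Bregman sum `Σ w_i d_φ(x_i, ·)`: expanding the divergences gives the identity
`Σ w_i d_φ(x_i, θ) = Σ w_i d_φ(x_i, θ̃) + (Σ w_i) d_φ(θ̃, θ)`, and `d_φ ≥ 0` by convexity of `φ`. -/

open scoped RealInnerProductSpace

/-- The Bregman divergence `d_φ(x, θ) = φ(x) − φ(θ) − ⟨x − θ, ∇φ(θ)⟩`. -/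
noncomputable def bregman {E : Type*} [NormedAddCommGroup E] [InnerProductSpace ℝ E]
    [CompleteSpace E] (φ : E → ℝ) (x θ : E) : ℝ :=
  φ x - φ θ - ⟪x - θ, gradient φ θ⟫

theorem ConcaveOn.le_add_derivWithin_mul_sub {S : Set ℝ} {f : ℝ → ℝ} {a b : ℝ}
    (hf : ConcaveOn ℝ S f) (ha : a ∈ S) (hb : b ∈ S) (hfd : DifferentiableWithinAt ℝ f S a) :
    f b ≤ f a + derivWithin f S a * (b - a) := by
  rcases lt_trichotomy a b with hab | rfl | hba
  · have h := hf.slope_le_derivWithin ha hb hab hfd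
    rw [slope_def_field, div_le_iff₀ (sub_pos.2 hab)] at h
    linarith
  · simp
  · have h := hf.derivWithin_le_slope hb ha hba hfd
    rw [slope_def_field, le_div_iff₀ (sub_pos.2 hba)] at h
    linarith

theorem ConvexOn.add_fderiv_sub_le {E : Type*} [NormedAddCommGroup E] [NormedSpace ℝ E]
    {s : Set E} {φ : E → ℝ} (hφ : ConvexOn ℝ s φ) {x θ : E} (hx : x ∈ s) (hθ : θ ∈ s)
    (hd : DifferentiableAt ℝ φ θ) :
    φ θ + fderiv ℝ φ θ (x - θ) ≤ φ x := by
  set L : ℝ →ᵃ[ℝ] E := AffineMap.lineMap θ x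
  have hL0 : L 0 = θ := AffineMap.lineMap_apply_zero θ x
  have hL1 : L 1 = x := AffineMap.lineMap_apply_one θ x
  have hline : ConvexOn ℝ (L ⁻¹' s) (φ ∘ L) := hφ.comp_affineMap L
  have hderiv : HasDerivAt (φ ∘ L) (fderiv ℝ φ θ (x - θ)) 0 := by
    refine HasFDerivAt.comp_hasDerivAt _ ?_ AffineMap.hasDerivAt_lineMap
    rw [hL0]
    exact hd.hasFDerivAt
  have h := hline.le_slope_of_hasDerivAt (by simpa [hL0]) (by simpa [hL1]) zero_lt_one hderiv
  rw [slope_def_field, Function.comp_apply, Function.comp_apply, hL0, hL1] at h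
  linarith

section Bregman

variable {E : Type*} [NormedAddCommGroup E] [InnerProductSpace ℝ E] [CompleteSpace E]
  {φ : E → ℝ}

theorem bregman_nonneg {s : Set E} (hφ : ConvexOn ℝ s φ) {x θ : E} (hx : x ∈ s) (hθ : θ ∈ s)
    (hd : DifferentiableAt ℝ φ θ) : 0 ≤ bregman φ x θ := by
  have h := hφ.add_fderiv_sub_le hx hθ hd
  rw [← InnerProductSpace.toDual_symm_apply, real_inner_comm, ← gradient] at h
  rw [bregman]
  linarith

theorem sum_mul_bregman_eq_sum_mul_bregman_centerMass_add {ι : Type*} (t : Finset ι)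
    (w : ι → ℝ) (x : ι → E) (hw : ∑ i ∈ t, w i ≠ 0) (θ : E) :
    ∑ i ∈ t, w i * bregman φ (x i) θ =
      ∑ i ∈ t, w i * bregman φ (x i) (t.centerMass w x) +
        (∑ i ∈ t, w i) * bregman φ (t.centerMass w x) θ := by
  have hμ : ∑ i ∈ t, w i • x i = (∑ i ∈ t, w i) • t.centerMass w x := by
    rw [Finset.centerMass, smul_inv_smul₀ hw]
  set μ := t.centerMass w x
  set c := φ μ - φ θ + ⟪θ, gradient φ θ⟫ - ⟪μ, gradient φ μ⟫
  rw [← sub_eq_iff_eq_add', ← Finset.sum_sub_distrib]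
  calc ∑ i ∈ t, (w i * bregman φ (x i) θ - w i * bregman φ (x i) μ)
      = ∑ i ∈ t, (w i * c + (⟪w i • x i, gradient φ μ⟫ - ⟪w i • x i, gradient φ θ⟫)) :=
        Finset.sum_congr rfl fun i _ => by
          simp only [c, bregman, inner_sub_left, real_inner_smul_left]; ring
    _ = (∑ i ∈ t, w i) * c +
          (⟪∑ i ∈ t, w i • x i, gradient φ μ⟫ - ⟪∑ i ∈ t, w i • x i, gradient φ θ⟫) := by
        rw [Finset.sum_add_distrib, Finset.sum_sub_distrib, ← Finset.sum_mul, sum_inner,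
          sum_inner]
    _ = (∑ i ∈ t, w i) * bregman φ μ θ := by
        rw [hμ]
        simp only [c, bregman, inner_sub_left, real_inner_smul_left]
        ring

theorem sum_mul_bregman_centerMass_le {ι : Type*} (hφ : ConvexOn ℝ Set.univ φ) {θ : E}
    (hd : DifferentiableAt ℝ φ θ) (t : Finset ι) (w : ι → ℝ) (x : ι → E)
    (hw : 0 < ∑ i ∈ t, w i) :
    ∑ i ∈ t, w i * bregman φ (x i) (t.centerMass w x) ≤ ∑ i ∈ t, w i * bregman φ (x i) θ := by
  rw [sum_mul_bregman_eq_sum_mul_bregman_centerMass_add t w x hw.ne' θ, le_add_iff_nonneg_right]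
  exact mul_nonneg hw.le (bregman_nonneg hφ trivial trivial hd)

end Bregman

theorem weighted_mean_update_decreases_f_separable_objective_general
    {E : Type*} [NormedAddCommGroup E] [InnerProductSpace ℝ E] [CompleteSpace E]
    (φ : E → ℝ) (hφdiff : Differentiable ℝ φ)
    (hφconv : StrictConvexOn ℝ Set.univ φ)
    (f : ℝ → ℝ) (hfdiff : DifferentiableOn ℝ f (Set.Ici 0))
    (hfconc : ConcaveOn ℝ (Set.Ici 0) f)
    (n : ℕ) (x : Fin n → E) (θ : E)
    (w : Fin n → ℝ)
    (hw : ∀ i, w i = derivWithin f (Set.Ici 0) (bregman φ (x i) θ))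
    (hwpos : 0 < ∑ i, w i)
    (θnew : E) (hθnew : θnew = (∑ i, w i)⁻¹ • ∑ i, w i • x i) :
    ∑ i, f (bregman φ (x i) θnew) ≤ ∑ i, f (bregman φ (x i) θ) := by
  have hbregman_mem (y θ' : E) : bregman φ y θ' ∈ Set.Ici 0 :=
    bregman_nonneg hφconv.convexOn trivial trivial (hφdiff θ')
  have htangent (i : Fin n) : f (bregman φ (x i) θnew) ≤
      f (bregman φ (x i) θ) + w i * (bregman φ (x i) θnew - bregman φ (x i) θ) := by
    rw [hw i]
    exact hfconc.le_add_derivWithin_mul_sub (hbregman_mem _ _) (hbregman_mem _ _)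
      (hfdiff _ (hbregman_mem _ _))
  have hmean : ∑ i, w i * bregman φ (x i) θnew ≤ ∑ i, w i * bregman φ (x i) θ := by
    rw [hθnew]
    exact sum_mul_bregman_centerMass_le hφconv.convexOn (hφdiff θ) Finset.univ w x hwpos
  calc ∑ i, f (bregman φ (x i) θnew)
      ≤ ∑ i, (f (bregman φ (x i) θ) + w i * (bregman φ (x i) θnew - bregman φ (x i) θ)) :=
        Finset.sum_le_sum fun i _ => htangent i
    _ = ∑ i, f (bregman φ (x i) θ) +
          (∑ i, w i * bregman φ (x i) θnew - ∑ i, w i * bregman φ (x i) θ) := by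
        simp only [Finset.sum_add_distrib, mul_sub, Finset.sum_sub_distrib]
    _ ≤ ∑ i, f (bregman φ (x i) θ) := by linarith

/-- The weighted-mean update of the cluster center, with weights
`w_i = f'(d_φ(x_i, θ))`, monotonically decreases the `f`-separable objective
when `f` is differentiable, nondecreasing and concave on `[0, ∞)`. -/
theorem weighted_mean_update_decreases_f_separable_objective
    {E : Type*} [NormedAddCommGroup E] [InnerProductSpace ℝ E] [CompleteSpace E]
    (φ : E → ℝ) (hφdiff : Differentiable ℝ φ)
    (hφconv : StrictConvexOn ℝ Set.univ φ)
    (f : ℝ → ℝ) (hfdiff : DifferentiableOn ℝ f (Set.Ici 0))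
    (hfmono : MonotoneOn f (Set.Ici 0)) (hfconc : ConcaveOn ℝ (Set.Ici 0) f)
    (n : ℕ) (x : Fin n → E) (θ : E)
    (w : Fin n → ℝ)
    (hw : ∀ i, w i = derivWithin f (Set.Ici 0) (bregman φ (x i) θ))
    (hwpos : 0 < ∑ i, w i)
    (θnew : E) (hθnew : θnew = (∑ i, w i)⁻¹ • ∑ i, w i • x i) :
    ∑ i, f (bregman φ (x i) θnew) ≤ ∑ i, f (bregman φ (x i) θ) :=
  weighted_mean_update_decreases_f_separable_objective_general φ hφdiff hφconv f hfdiff hfconc n x θ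
    w hw hwpos θnew hθnew
end

section
/- Let E be a finite-dimensional real inner product space and φ: E → ℝ a continuously differentiable strictly convex function with Bregman divergence d_φ. Let f': (0, ∞) → (0, ∞) be continuous, nonincreasing, with f'(z) → ∞ as z → 0⁺. Let x_1, …, x_n ∈ E be pairwise distinct and fix an index i*. Then, as θ → x_{i*} with θ ∉ {x_1, …, x_n}: (i) for every i ≠ i*, f'(d_φ(x_i, θ))/f'(d_φ(x_{i*}, θ)) → 0; and (ii) the weighted mean m(θ) = (Σ_{i=1}^n f'(d_φ(x_i, θ)) x_i)/(Σ_{j=1}^n f'(d_φ(x_j, θ))) converges to x_{i*}. Hence if the cluster center coincides with a data point, the update rule does not move it away from that point. -/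
/-!
As `θ → x_{i*}` off the data, `d_φ(x_{i*}, θ) → 0⁺`, so the weight of `x_{i*}` blows up, while for
`i ≠ i*` the divergence `d_φ(x_i, θ)` tends to `d_φ(x_i, x_{i*}) > 0`, where `f'` is continuous,
so the other weights stay bounded. Dividing numerator and denominator of the weighted mean by the
dominant weight leaves a mean whose weights tend to the indicator of `i*`.

Strict positivity of `d_φ(x, θ)` for `x ≠ θ` is strict convexity of `φ` on the line through `θ`
and `x`: the tangent slope at `θ` lies strictly below the secant slope.
-/

open scoped RealInnerProductSpace
open Filter Topology

open Function Set

theorem StrictConvexOn.comp_affineMap {𝕜 E F β : Type*} [Field 𝕜] [LinearOrder 𝕜]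
    [AddCommGroup E] [AddCommGroup F] [AddCommMonoid β] [PartialOrder β]
    [Module 𝕜 E] [Module 𝕜 F] [SMul 𝕜 β] {f : F → β} (g : E →ᵃ[𝕜] F) (hg : Injective g)
    {s : Set F} (hf : StrictConvexOn 𝕜 s f) : StrictConvexOn 𝕜 (g ⁻¹' s) (f ∘ g) :=
  ⟨hf.1.affine_preimage _, fun x hx y hy hxy a b ha hb hab =>
    calc
      (f ∘ g) (a • x + b • y) = f (a • g x + b • g y) := by
        rw [comp_apply, Convex.combo_affine_apply hab]
      _ < a • f (g x) + b • f (g y) := hf.2 hx hy (hg.ne hxy) ha hb hab⟩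

theorem tendsto_weightedMean_of_dominant_weight {α ι 𝕜 E : Type*} [Fintype ι] [NormedField 𝕜]
    [AddCommGroup E] [Module 𝕜 E] [TopologicalSpace E] [ContinuousAdd E] [ContinuousSMul 𝕜 E]
    {l : Filter α} {w : ι → α → 𝕜} {x : ι → E} {k : ι} (hk : ∀ᶠ a in l, w k a ≠ 0)
    (hratio : ∀ i ≠ k, Tendsto (fun a => w i a / w k a) l (𝓝 0)) :
    Tendsto (fun a => (∑ j, w j a)⁻¹ • ∑ i, w i a • x i) l (𝓝 (x k)) := by
  classical
  have hlim : ∀ i, Tendsto (fun a => w i a / w k a) l (𝓝 (if i = k then 1 else 0)) := by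
    intro i
    by_cases hi : i = k
    · subst hi
      simpa using tendsto_const_nhds.congr' (hk.mono fun a ha => (div_self ha).symm)
    · simpa [hi] using hratio i hi
  have hsum : Tendsto (fun a => ∑ j, w j a / w k a) l (𝓝 1) := by
    simpa using tendsto_finsetSum Finset.univ fun j _ => hlim j
  have hvec : Tendsto (fun a => ∑ i, (w i a / w k a) • x i) l (𝓝 (x k)) := by
    simpa [ite_smul] using tendsto_finsetSum Finset.univ fun i _ => (hlim i).smul_const (x i)
  have hmean := (hsum.inv₀ one_ne_zero).smul hvec
  rw [inv_one, one_smul] at hmean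
  refine hmean.congr' ?_
  filter_upwards [hk] with a ha
  simp only [div_eq_inv_mul, ← Finset.mul_sum, ← smul_smul, ← Finset.smul_sum, mul_inv, inv_inv]
  rw [smul_comm (w k a), smul_inv_smul₀ ha]

section Bregman

variable {E : Type*} [NormedAddCommGroup E] [InnerProductSpace ℝ E] [CompleteSpace E]
  {φ : E → ℝ}

@[simp]
theorem bregman_self (θ : E) : bregman φ θ θ = 0 := by
  simp [bregman]

theorem continuous_bregman (hφ : ContDiff ℝ 1 φ) (x : E) : Continuous (bregman φ x) := by
  have hgrad : Continuous (gradient φ) :=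
    (InnerProductSpace.toDual ℝ E).symm.continuous.comp (hφ.continuous_fderiv one_ne_zero)
  exact (continuous_const.sub hφ.continuous).sub ((continuous_const.sub continuous_id).inner hgrad)

theorem bregman_pos (hconv : StrictConvexOn ℝ univ φ) {x θ : E} (hdiff : DifferentiableAt ℝ φ θ)
    (hne : x ≠ θ) : 0 < bregman φ x θ := by
  have hline : StrictConvexOn ℝ univ (φ ∘ (AffineMap.lineMap θ x : ℝ → E)) :=
    hconv.comp_affineMap _ (AffineMap.lineMap_injective ℝ hne.symm)
  have hderiv : HasDerivAt (φ ∘ (AffineMap.lineMap θ x : ℝ → E)) (fderiv ℝ φ θ (x - θ)) 0 := by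
    refine HasFDerivAt.comp_hasDerivAt (0 : ℝ) ?_ AffineMap.hasDerivAt_lineMap
    simpa using hdiff.hasFDerivAt
  have hslope : fderiv ℝ φ θ (x - θ) < φ x - φ θ := by
    simpa [slope_def_field] using
      hline.lt_slope_of_hasDerivAt (mem_univ 0) (mem_univ 1) one_pos hderiv
  have hinner : ⟪x - θ, gradient φ θ⟫ = fderiv ℝ φ θ (x - θ) := by
    rw [real_inner_comm, gradient, InnerProductSpace.toDual_symm_apply]
  rw [bregman, hinner]
  exact sub_pos.mpr hslope

theorem tendsto_bregman_nhdsNE (hφ : ContDiff ℝ 1 φ) (hconv : StrictConvexOn ℝ univ φ) (x : E) :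
    Tendsto (bregman φ x) (𝓝[≠] x) (𝓝[>] 0) := by
  refine tendsto_nhdsWithin_iff.mpr ⟨?_, ?_⟩
  · simpa using ((continuous_bregman hφ x).tendsto x).mono_left nhdsWithin_le_nhds
  · filter_upwards [self_mem_nhdsWithin] with θ hθ
    exact bregman_pos hconv (hφ.differentiable one_ne_zero θ) (Ne.symm hθ)

end Bregman

theorem weighted_mean_sticks_to_data_point_general
    {E : Type*} [NormedAddCommGroup E] [InnerProductSpace ℝ E] [FiniteDimensional ℝ E]
    (φ : E → ℝ) (hφ : ContDiff ℝ 1 φ) (hφconv : StrictConvexOn ℝ Set.univ φ)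
    (g : ℝ → ℝ) (hgcont : ContinuousOn g (Set.Ioi 0))
    (hgtop : Tendsto g (nhdsWithin 0 (Set.Ioi 0)) atTop)
    (n : ℕ) (x : Fin n → E) (hx : Function.Injective x)
    (istar : Fin n) :
    (∀ i : Fin n, i ≠ istar →
      Tendsto (fun θ : E => g (bregman φ (x i) θ) / g (bregman φ (x istar) θ))
        (𝓝[(Set.range x)ᶜ] (x istar)) (𝓝 0)) ∧
    Tendsto (fun θ : E =>
        (∑ j, g (bregman φ (x j) θ))⁻¹ • ∑ i, g (bregman φ (x i) θ) • x i)
      (𝓝[(Set.range x)ᶜ] (x istar)) (𝓝 (x istar)) := by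
  have hnear : 𝓝[(Set.range x)ᶜ] (x istar) ≤ 𝓝[≠] (x istar) :=
    nhdsWithin_mono _ (compl_subset_compl.mpr (singleton_subset_iff.mpr (mem_range_self istar)))
  have hstar : Tendsto (fun θ => g (bregman φ (x istar) θ)) (𝓝[(Set.range x)ᶜ] (x istar)) atTop :=
    hgtop.comp ((tendsto_bregman_nhdsNE hφ hφconv (x istar)).mono_left hnear)
  have hratio : ∀ i ≠ istar, Tendsto (fun θ => g (bregman φ (x i) θ) / g (bregman φ (x istar) θ))
      (𝓝[(Set.range x)ᶜ] (x istar)) (𝓝 0) := by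
    intro i hi
    have hpos : 0 < bregman φ (x i) (x istar) :=
      bregman_pos hφconv (hφ.differentiable one_ne_zero _) (hx.ne hi)
    have hgi := (hgcont.continuousAt (Ioi_mem_nhds hpos)).tendsto.comp
      ((continuous_bregman hφ (x i)).tendsto (x istar))
    exact (hgi.mono_left nhdsWithin_le_nhds).div_atTop hstar
  exact ⟨hratio, tendsto_weightedMean_of_dominant_weight (hstar.eventually_ne_atTop 0) hratio⟩

/-- If `f'` (denoted `g`) is continuous, nonincreasing, positive on `(0, ∞)` and
blows up at `0⁺`, then as `θ → x_{i*}` (avoiding the data points): the relative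
weights `g(d_φ(x_i, θ))/g(d_φ(x_{i*}, θ))` of the other points vanish, and the
weighted mean converges to `x_{i*}`; the update does not move a center away
from a data point it coincides with. -/
theorem weighted_mean_sticks_to_data_point
    {E : Type*} [NormedAddCommGroup E] [InnerProductSpace ℝ E] [FiniteDimensional ℝ E]
    (φ : E → ℝ) (hφ : ContDiff ℝ 1 φ) (hφconv : StrictConvexOn ℝ Set.univ φ)
    (g : ℝ → ℝ) (hgcont : ContinuousOn g (Set.Ioi 0))
    (hganti : AntitoneOn g (Set.Ioi 0))
    (hgpos : ∀ z ∈ Set.Ioi (0 : ℝ), 0 < g z)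
    (hgtop : Tendsto g (nhdsWithin 0 (Set.Ioi 0)) atTop)
    (n : ℕ) (x : Fin n → E) (hx : Function.Injective x)
    (istar : Fin n) :
    (∀ i : Fin n, i ≠ istar →
      Tendsto (fun θ : E => g (bregman φ (x i) θ) / g (bregman φ (x istar) θ))
        (𝓝[(Set.range x)ᶜ] (x istar)) (𝓝 0)) ∧
    Tendsto (fun θ : E =>
        (∑ j, g (bregman φ (x j) θ))⁻¹ • ∑ i, g (bregman φ (x i) θ) • x i)
      (𝓝[(Set.range x)ᶜ] (x istar)) (𝓝 (x istar)) :=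
  weighted_mean_sticks_to_data_point_general φ hφ hφconv g hgcont hgtop n x hx istar
end

section
/- (Necessary condition for a bounded influence function.) Let φ: ℝ → ℝ be twice differentiable at θ with φ''(θ) > 0, with one-dimensional Bregman divergence d_φ(x, θ) = φ(x) − φ(θ) − (x − θ)φ'(θ), and suppose d_φ(x, θ) → ∞ as |x| → ∞. Let f: [0, ∞) → ℝ be differentiable and monotone nondecreasing with liminf_{z→∞} f'(z) > 0 (in particular, f' does not tend to 0 at infinity; this covers linear and convex f and concave f whose derivative does not vanish at infinity). Then the influence-function magnitude x* ↦ f'(d_φ(x*, θ)) · φ''(θ) · |x* − θ| is unbounded on ℝ: its supremum over x* ∈ ℝ is +∞. -/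
open Filter Topology

theorem Filter.Tendsto.mul_atTop_of_eventually_ge {α 𝕜 : Type*} [Field 𝕜] [LinearOrder 𝕜]
    [IsStrictOrderedRing 𝕜] {l : Filter α} {u v : α → 𝕜} {ε : 𝕜} (hε : 0 < ε)
    (hu : ∀ᶠ x in l, ε ≤ u x) (hv : Tendsto v l atTop) :
    Tendsto (fun x => u x * v x) l atTop := by
  refine tendsto_atTop_mono' l ?_ (hv.const_mul_atTop hε)
  filter_upwards [hu, hv.eventually_ge_atTop 0] with x hux hvx
  exact mul_le_mul_of_nonneg_right hux hvx

theorem influence_function_unbounded_of_deriv_not_vanishing_general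
    (θ : ℝ) (φ'' : ℝ) (hφ''pos : 0 < φ'')
    (d : ℝ → ℝ) (hdtop : Tendsto d (Filter.cocompact ℝ) atTop) (f : ℝ → ℝ)
    (hliminf : ∃ ε > (0 : ℝ), ∀ᶠ z in atTop, ε ≤ derivWithin f (Set.Ici 0) z) :
    ∀ M : ℝ, ∃ x : ℝ, M < derivWithin f (Set.Ici 0) (d x) * φ'' * |x - θ| := by
  intro M
  obtain ⟨ε, hε, hf'⟩ := hliminf
  have hcoeff : ∀ᶠ x in cocompact ℝ, ε * φ'' ≤ derivWithin f (Set.Ici 0) (d x) * φ'' :=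
    (hdtop.eventually hf').mono fun x hx => mul_le_mul_of_nonneg_right hx hφ''pos.le
  have hinfluence : Tendsto (fun x => derivWithin f (Set.Ici 0) (d x) * φ'' * |x - θ|)
      (cocompact ℝ) atTop :=
    (tendsto_dist_right_cocompact_atTop θ).mul_atTop_of_eventually_ge (mul_pos hε hφ''pos) hcoeff
  exact (hinfluence.eventually_gt_atTop M).exists

/-- Necessary condition for a bounded influence function: if `f'` does not tend
to `0` at infinity (`liminf_{z→∞} f'(z) > 0`, expressed as: `f'` is eventually
bounded below by some `ε > 0`), then the influence-function magnitude
`x* ↦ f'(d_φ(x*, θ)) · φ''(θ) · |x* − θ|` is unbounded. -/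
theorem influence_function_unbounded_of_deriv_not_vanishing
    (φ : ℝ → ℝ) (θ : ℝ) (hφdiff : Differentiable ℝ φ)
    (φ'' : ℝ) (hφ'' : HasDerivAt (deriv φ) φ'' θ) (hφ''pos : 0 < φ'')
    (d : ℝ → ℝ) (hd : ∀ x, d x = φ x - φ θ - (x - θ) * deriv φ θ)
    (hdtop : Tendsto d (Filter.cocompact ℝ) atTop)
    (f : ℝ → ℝ) (hfdiff : DifferentiableOn ℝ f (Set.Ici 0))
    (hfmono : MonotoneOn f (Set.Ici 0))
    (hliminf : ∃ ε > (0 : ℝ), ∀ᶠ z in atTop, ε ≤ derivWithin f (Set.Ici 0) z) :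
    ∀ M : ℝ, ∃ x : ℝ, M < derivWithin f (Set.Ici 0) (d x) * φ'' * |x - θ| :=
  influence_function_unbounded_of_deriv_not_vanishing_general θ φ'' hφ''pos d hdtop f hliminf
end

section
/- (Redescending influence function for the power mean with β < 0.) Let L ≥ 1, and for each l = 1, …, L let φ_l: ℝ → ℝ be differentiable and strictly convex with one-dimensional Bregman divergence d_{φ_l}(x, t) = φ_l(x) − φ_l(t) − (x − t)φ_l'(t), and suppose d_{φ_l}(x, θ^{(l)}) → ∞ as |x| → ∞. Define the additive Bregman divergence on ℝ^L by d_φ(x, θ) = Σ_{l=1}^L d_{φ_l}(x^{(l)}, θ^{(l)}) and fix θ ∈ ℝ^L, a ≥ 0, β < 0, and any linear map A: ℝ^L → ℝ^L. Then lim_{‖x‖ → ∞} (d_φ(x, θ) + a)^{β − 1} · ‖A(x − θ)‖ = 0. In particular, for the power-mean objective with β < 0 the influence function is redescending for general (additive) Bregman divergences. -/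
/-!
Each coordinate divergence `d l = φ l - (affine)` is convex, and a convex function tending to `∞`
at infinity grows at least linearly: on the sphere of radius `R` around `x₀` it exceeds
`f x₀ + 1`, so by convexity along rays it exceeds `f x₀ + ‖x - x₀‖ / R` outside that sphere.
Summing over coordinates, `∑ l, d l (x l) + a ≥ c ‖x - θ‖ - C`, hence
`‖A (x - θ)‖ = O(∑ l, d l (x l) + a)` and the product is `O((∑ l, d l (x l) + a) ^ β) → 0`.
-/

open Filter Topology Set Asymptotics Metric

noncomputable def bregmanDiv (φ : ℝ → ℝ) (t x : ℝ) : ℝ :=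
  φ x - φ t - (x - t) * deriv φ t

lemma ConvexOn.bregmanDiv {φ : ℝ → ℝ} (hφ : ConvexOn ℝ univ φ) (t : ℝ) :
    ConvexOn ℝ univ (bregmanDiv φ t) := by
  have hsum : _root_.bregmanDiv φ t =
      φ + ⇑(LinearMap.mulLeft ℝ (-deriv φ t)) + fun _ => t * deriv φ t - φ t := by
    ext x
    simp only [_root_.bregmanDiv, Pi.add_apply, LinearMap.mulLeft_apply]
    ring
  rw [hsum]
  exact (hφ.add ((LinearMap.mulLeft ℝ _).convexOn convex_univ)).add_const _

section
variable {E : Type*} [NormedAddCommGroup E] [NormedSpace ℝ E] {f : E → ℝ} {x₀ : E}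

lemma ConvexOn.div_le_sub_of_le_norm_sub (hf : ConvexOn ℝ univ f) {R : ℝ} (hR : 0 < R)
    (hsphere : ∀ y, ‖y - x₀‖ = R → f x₀ + 1 ≤ f y) {x : E} (hx : R ≤ ‖x - x₀‖) :
    ‖x - x₀‖ / R ≤ f x - f x₀ := by
  have hr : 0 < ‖x - x₀‖ := hR.trans_le hx
  obtain ⟨μ, hμ⟩ : ∃ μ, μ * ‖x - x₀‖ = R := ⟨R / ‖x - x₀‖, div_mul_cancel₀ R hr.ne'⟩
  have hμ0 : 0 ≤ μ := by nlinarith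
  have hμ1 : μ ≤ 1 := by nlinarith
  have hy : ‖(1 - μ) • x₀ + μ • x - x₀‖ = R := by
    rw [show (1 - μ) • x₀ + μ • x - x₀ = μ • (x - x₀) by module, norm_smul,
      Real.norm_of_nonneg hμ0, hμ]
  have hseg := hf.2 (mem_univ x₀) (mem_univ x) (sub_nonneg.2 hμ1) hμ0 (sub_add_cancel 1 μ)
  simp only [smul_eq_mul] at hseg
  have h1 : 1 ≤ μ * (f x - f x₀) := by linarith [hsphere _ hy]
  rw [div_le_iff₀ hR, ← hμ]
  nlinarith

lemma ConvexOn.exists_mul_norm_sub_sub_le [FiniteDimensional ℝ E] (hf : ConvexOn ℝ univ f)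
    (htop : Tendsto f (cocompact E) atTop) (x₀ : E) :
    ∃ c > 0, ∃ C, ∀ x, c * ‖x - x₀‖ - C ≤ f x := by
  obtain ⟨R₀, hR₀⟩ : ∃ R, ∀ y, R ≤ ‖y - x₀‖ → f x₀ + 1 ≤ f y := by
    have := htop.eventually_ge_atTop (f x₀ + 1)
    rw [← comap_dist_left_atTop_eq_cocompact x₀, (atTop_basis.comap _).eventually_iff] at this
    obtain ⟨R, -, hR⟩ := this
    exact ⟨R, fun y hy => hR (by simpa [dist_eq_norm'] using hy)⟩
  set R := max R₀ 1
  have hR : 0 < R := zero_lt_one.trans_le (le_max_right _ _)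
  obtain ⟨m, hm⟩ := (isCompact_closedBall x₀ R).bddBelow_image
    ((hf.continuousOn isOpen_univ).mono (subset_univ _))
  have hm_le : ∀ x, ‖x - x₀‖ ≤ R → m ≤ f x := fun x hx =>
    hm (mem_image_of_mem f (mem_closedBall_iff_norm.2 hx))
  refine ⟨R⁻¹, inv_pos.2 hR, 1 - m, fun x => ?_⟩
  rw [← div_eq_inv_mul]
  rcases le_total ‖x - x₀‖ R with hx | hx
  · linarith [hm_le x hx, (div_le_one hR).2 hx]
  · have := hf.div_le_sub_of_le_norm_sub hR (fun y hy => hR₀ y (hy ▸ le_max_left _ _)) hx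
    linarith [hm_le x₀ (by simpa using hR.le)]

end

lemma EuclideanSpace.norm_le_sum_norm {ι : Type*} [Fintype ι] (x : EuclideanSpace ℝ ι) :
    ‖x‖ ≤ ∑ i, ‖x i‖ := by
  rw [EuclideanSpace.norm_eq]
  calc √(∑ i, ‖x i‖ ^ 2) ≤ √((∑ i, ‖x i‖) ^ 2) :=
        Real.sqrt_le_sqrt (Finset.sum_sq_le_sq_sum_of_nonneg fun i _ => norm_nonneg _)
    _ = ∑ i, ‖x i‖ := Real.sqrt_sq (Finset.sum_nonneg fun i _ => norm_nonneg _)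

lemma exists_mul_norm_sub_sub_le_sum {ι : Type*} [Fintype ι] {f : ι → ℝ → ℝ}
    {θ : EuclideanSpace ℝ ι} (hf : ∀ i, ∃ c > 0, ∃ C, ∀ t, c * ‖t - θ i‖ - C ≤ f i t) :
    ∃ c > 0, ∃ C, ∀ x : EuclideanSpace ℝ ι, c * ‖x - θ‖ - C ≤ ∑ i, f i (x i) := by
  -- a slope that works for one coordinate works for every smaller positive one
  have hsmall : ∀ᶠ c in 𝓝[>] (0 : ℝ), ∀ i, ∃ C, ∀ t, c * ‖t - θ i‖ - C ≤ f i t := by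
    refine eventually_all.2 fun i => ?_
    obtain ⟨c, hc, C, h⟩ := hf i
    filter_upwards [Ioc_mem_nhdsGT hc] with c' hc'
    exact ⟨C, fun t => le_trans (by gcongr; exact hc'.2) (h t)⟩
  obtain ⟨c, hC, hc⟩ := (hsmall.and self_mem_nhdsWithin).exists
  choose C hC using hC
  refine ⟨c, hc, ∑ i, C i, fun x => ?_⟩
  calc c * ‖x - θ‖ - ∑ i, C i ≤ ∑ i, (c * ‖x i - θ i‖ - C i) := by
        rw [Finset.sum_sub_distrib, ← Finset.mul_sum]
        gcongr
        exact (x - θ).norm_le_sum_norm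
    _ ≤ ∑ i, f i (x i) := Finset.sum_le_sum fun i _ => hC i (x i)

lemma tendsto_rpow_sub_one_mul_norm_cocompact {E F : Type*} [NormedAddCommGroup E]
    [NormedSpace ℝ E] [ProperSpace E] [NormedAddCommGroup F] [NormedSpace ℝ F]
    {g : E → ℝ} {x₀ : E} {c C β : ℝ} (hc : 0 < c) (hg : ∀ x, c * ‖x - x₀‖ - C ≤ g x)
    (hβ : β < 0) (A : E →L[ℝ] F) :
    Tendsto (fun x => g x ^ (β - 1) * ‖A (x - x₀)‖) (cocompact E) (𝓝 0) := by
  have hnorm : Tendsto (fun x => ‖x - x₀‖) (cocompact E) atTop := by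
    simpa only [dist_eq_norm] using tendsto_dist_right_cocompact_atTop x₀
  have hg_top : Tendsto g (cocompact E) atTop :=
    tendsto_atTop_mono hg (tendsto_atTop_add_const_right _ _ (hnorm.const_mul_atTop hc))
  have hlin : (fun x => x - x₀) =O[cocompact E] g := by
    refine IsBigO.of_bound (2 / c) ?_
    filter_upwards [hnorm.eventually_ge_atTop (2 * C / c)] with x hx
    rw [div_le_iff₀ hc] at hx
    rw [Real.norm_eq_abs, div_mul_eq_mul_div, le_div_iff₀ hc]
    linarith [hg x, le_abs_self (g x)]
  have hbigO : (fun x => g x ^ (β - 1) * ‖A (x - x₀)‖) =O[cocompact E]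
      fun x => g x ^ (β - 1) * g x :=
    (isBigO_refl _ _).mul ((A.isBigO_comp _ _).norm_left.trans hlin)
  refine hbigO.trans_tendsto ((tendsto_rpow_neg_atTop (neg_pos.2 hβ)).comp hg_top |>.congr' ?_)
  filter_upwards [hg_top.eventually_gt_atTop 0] with x hx
  rw [Function.comp_apply, neg_neg, Real.rpow_sub_one hx.ne', div_mul_cancel₀ _ hx.ne']

theorem power_mean_influence_redescending_general
    (L : ℕ)
    (φ : Fin L → ℝ → ℝ)
    (hφconv : ∀ l, StrictConvexOn ℝ Set.univ (φ l))
    (θ : EuclideanSpace ℝ (Fin L))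
    (d : Fin L → ℝ → ℝ)
    (hd : ∀ l xl, d l xl = φ l xl - φ l (θ l) - (xl - θ l) * deriv (φ l) (θ l))
    (hdtop : ∀ l, Tendsto (d l) (Filter.cocompact ℝ) atTop)
    (a β : ℝ) (hβ : β < 0)
    (A : EuclideanSpace ℝ (Fin L) →ₗ[ℝ] EuclideanSpace ℝ (Fin L)) :
    Tendsto (fun x : EuclideanSpace ℝ (Fin L) =>
        ((∑ l, d l (x l)) + a) ^ (β - 1) * ‖A (x - θ)‖)
      (Filter.cocompact (EuclideanSpace ℝ (Fin L))) (𝓝 0) := by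
  have hd_conv (l : Fin L) : ConvexOn ℝ univ (d l) :=
    funext (hd l) ▸ (hφconv l).convexOn.bregmanDiv (θ l)
  obtain ⟨c, hc, C, hC⟩ := exists_mul_norm_sub_sub_le_sum fun l =>
    (hd_conv l).exists_mul_norm_sub_sub_le (hdtop l) (θ l)
  exact tendsto_rpow_sub_one_mul_norm_cocompact hc (C := C - a)
    (fun x => by linarith [hC x]) hβ (LinearMap.toContinuousLinearMap A)

/-- Redescending influence function for the power mean with `β < 0`: for an
additive Bregman divergence on `ℝ^L` whose coordinate divergences blow up at
infinity, `f'(d_φ(x, θ) + a) · ‖A(x − θ)‖ = (d_φ(x, θ) + a)^(β−1) ‖A(x − θ)‖ → 0`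
as `‖x‖ → ∞`. -/
theorem power_mean_influence_redescending
    (L : ℕ) (hL : 1 ≤ L)
    (φ : Fin L → ℝ → ℝ)
    (hφdiff : ∀ l, Differentiable ℝ (φ l))
    (hφconv : ∀ l, StrictConvexOn ℝ Set.univ (φ l))
    (θ : EuclideanSpace ℝ (Fin L))
    (d : Fin L → ℝ → ℝ)
    (hd : ∀ l xl, d l xl = φ l xl - φ l (θ l) - (xl - θ l) * deriv (φ l) (θ l))
    (hdtop : ∀ l, Tendsto (d l) (Filter.cocompact ℝ) atTop)
    (a β : ℝ) (ha : 0 ≤ a) (hβ : β < 0)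
    (A : EuclideanSpace ℝ (Fin L) →ₗ[ℝ] EuclideanSpace ℝ (Fin L)) :
    Tendsto (fun x : EuclideanSpace ℝ (Fin L) =>
        ((∑ l, d l (x l)) + a) ^ (β - 1) * ‖A (x - θ)‖)
      (Filter.cocompact (EuclideanSpace ℝ (Fin L))) (𝓝 0) :=
  power_mean_influence_redescending_general L φ hφconv θ d hd hdtop a β hβ A
end

section
/- (Redescending influence function for the log-sum-exp objective with β < 1.) Let L ≥ 1, and for each l = 1, …, L let φ_l: ℝ → ℝ be differentiable and strictly convex with one-dimensional Bregman divergence d_{φ_l}, and suppose d_{φ_l}(x, θ^{(l)}) → ∞ as |x| → ∞. Define d_φ(x, θ) = Σ_{l=1}^L d_{φ_l}(x^{(l)}, θ^{(l)}) on ℝ^L and fix θ ∈ ℝ^L, β < 1, and any linear map A: ℝ^L → ℝ^L. Then lim_{‖x‖ → ∞} exp(−(1 − β) d_φ(x, θ)) · ‖A(x − θ)‖ = 0. In particular, for the log-sum-exp objective with β < 1 the influence function is redescending for general (additive) Bregman divergences. -/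
/-!
Each coordinate divergence `d l` is `φ l` minus its tangent line at `θ l`, hence convex, and a
convex function tending to `+∞` at infinity grows at least linearly: it exceeds its value at the
centre by `1` on a large sphere, and convexity propagates this gain along every ray. A slope
`a > 0` common to all coordinates gives `∑ l, d l (x l) ≥ a * ‖x - θ‖ - C`, so the expression is
dominated by a multiple of `r * exp (-(1 - β) * a * r)` with `r = ‖x - θ‖ → ∞`.
-/

open Filter Topology

open Set Metric Real

section ConvexGrowth

variable {E : Type*} [NormedAddCommGroup E] [NormedSpace ℝ E] {g : E → ℝ}

theorem ConvexOn.add_mul_dist_div_le_of_sphere {x₀ : E} {R δ : ℝ} (hg : ConvexOn ℝ univ g)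
    (hR : 0 < R) (hsphere : ∀ y ∈ sphere x₀ R, g x₀ + δ ≤ g y) {x : E} (hx : R ≤ dist x x₀) :
    g x₀ + δ * (dist x x₀ / R) ≤ g x := by
  set s := dist x x₀
  have hs : 0 < s := hR.trans_le hx
  set μ := R / s
  have hμ : 0 < μ := div_pos hR hs
  have hμ1 : μ ≤ 1 := (div_le_one hs).2 hx
  have hp : (1 - μ) • x₀ + μ • x ∈ sphere x₀ R := by
    rw [mem_sphere, dist_eq_norm, show (1 - μ) • x₀ + μ • x - x₀ = μ • (x - x₀) by module,
      norm_smul, Real.norm_of_nonneg hμ.le, ← dist_eq_norm]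
    exact div_mul_cancel₀ R hs.ne'
  have hcvx := hg.2 (mem_univ x₀) (mem_univ x) (sub_nonneg.2 hμ1) hμ.le (sub_add_cancel 1 μ)
  have hgain : δ ≤ μ * (g x - g x₀) := by
    have := (hsphere _ hp).trans hcvx
    simp only [smul_eq_mul] at this
    linarith
  have hμs : μ * (s / R) = 1 := by simp only [μ]; field_simp
  calc g x₀ + δ * (s / R) ≤ g x₀ + μ * (g x - g x₀) * (s / R) := by gcongr
    _ = g x := by linear_combination (g x - g x₀) * hμs

variable [FiniteDimensional ℝ E]

theorem ConvexOn.exists_mul_dist_sub_le (hg : ConvexOn ℝ univ g)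
    (htop : Tendsto g (cocompact E) atTop) (x₀ : E) :
    ∃ a > 0, ∃ C, ∀ x, a * dist x x₀ - C ≤ g x := by
  obtain ⟨R₀, -, hR₀⟩ := (hasBasis_cobounded_compl_closedBall x₀).eventually_iff.1
    (cobounded_eq_cocompact (α := E) ▸ htop.eventually_ge_atTop (g x₀ + 1))
  set R := max R₀ 0 + 1
  have hR : 0 < R := by positivity
  have hsphere : ∀ y ∈ sphere x₀ R, g x₀ + 1 ≤ g y := fun y hy => hR₀ <| by
    rw [mem_compl_iff, mem_closedBall, not_le, mem_sphere.1 hy]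
    linarith [le_max_left R₀ 0]
  obtain ⟨z, -, hz⟩ := (isCompact_closedBall x₀ R).exists_isMinOn (nonempty_closedBall.2 hR.le)
    (continuousOn_univ.1 (hg.continuousOn isOpen_univ)).continuousOn
  refine ⟨1 / R, by positivity, 1 - g z, fun x => ?_⟩
  rcases le_or_gt (dist x x₀) R with hx | hx
  · have hslope : 1 / R * dist x x₀ ≤ 1 := by rw [div_mul_eq_mul_div, div_le_one hR]; linarith
    linarith [isMinOn_iff.1 hz x (mem_closedBall.2 hx)]
  · have hgrowth := hg.add_mul_dist_div_le_of_sphere hR hsphere hx.le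
    have hslope : 1 / R * dist x x₀ = 1 * (dist x x₀ / R) := by ring
    linarith [isMinOn_iff.1 hz x₀ (mem_closedBall_self hR.le)]

theorem ConvexOn.eventually_exists_mul_dist_sub_le (hg : ConvexOn ℝ univ g)
    (htop : Tendsto g (cocompact E) atTop) (x₀ : E) :
    ∀ᶠ a in 𝓝[>] 0, ∃ C, ∀ x, a * dist x x₀ - C ≤ g x := by
  obtain ⟨a, ha, C, hC⟩ := hg.exists_mul_dist_sub_le htop x₀
  filter_upwards [Ioc_mem_nhdsGT ha] with b hb
  exact ⟨C, fun x => le_trans (by gcongr; exact hb.2) (hC x)⟩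

end ConvexGrowth

theorem ConvexOn.sub_affine {φ : ℝ → ℝ} (hφ : ConvexOn ℝ univ φ) (θ c : ℝ) :
    ConvexOn ℝ univ (fun t => φ t - φ θ - (t - θ) * c) := by
  refine ((hφ.sub ((LinearMap.mulRight ℝ c).concaveOn convex_univ)).add_const
    (θ * c - φ θ)).congr fun t _ => ?_
  simp only [Pi.add_apply, Pi.sub_apply, LinearMap.mulRight_apply]
  ring

theorem EuclideanSpace.dist_le_sum_dist {ι : Type*} [Fintype ι] (x y : EuclideanSpace ℝ ι) :
    dist x y ≤ ∑ i, dist (x i) (y i) := by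
  rw [EuclideanSpace.dist_eq, Real.sqrt_le_iff]
  exact ⟨by positivity, Finset.sum_sq_le_sq_sum_of_nonneg fun i _ => dist_nonneg⟩

theorem EuclideanSpace.mul_dist_sub_sum_le_sum {ι : Type*} [Fintype ι] {g : ι → ℝ → ℝ}
    {θ : EuclideanSpace ℝ ι} {a : ℝ} {C : ι → ℝ} (ha : 0 ≤ a)
    (hg : ∀ i t, a * dist t (θ i) - C i ≤ g i t) (x : EuclideanSpace ℝ ι) :
    a * dist x θ - ∑ i, C i ≤ ∑ i, g i (x i) :=
  calc a * dist x θ - ∑ i, C i ≤ a * ∑ i, dist (x i) (θ i) - ∑ i, C i := by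
        gcongr; exact dist_le_sum_dist x θ
    _ = ∑ i, (a * dist (x i) (θ i) - C i) := by rw [Finset.mul_sum, Finset.sum_sub_distrib]
    _ ≤ ∑ i, g i (x i) := Finset.sum_le_sum fun i _ => hg i (x i)

theorem tendsto_exp_neg_mul_mul_dist_cocompact {X : Type*} [PseudoMetricSpace X] [ProperSpace X]
    {f : X → ℝ} {x₀ : X} {a c C : ℝ} (ha : 0 < a) (hc : 0 < c)
    (hf : ∀ x, a * dist x x₀ - C ≤ f x) :
    Tendsto (fun x => exp (-c * f x) * dist x x₀) (cocompact X) (𝓝 0) := by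
  have hdecay : Tendsto (fun x => exp (c * C) * (dist x x₀ ^ (1 : ℝ) * exp (-(c * a) * dist x x₀)))
      (cocompact X) (𝓝 0) := by
    simpa using ((tendsto_rpow_mul_exp_neg_mul_atTop_nhds_zero 1 (c * a) (by positivity)).comp
      (tendsto_dist_right_cocompact_atTop x₀)).const_mul (exp (c * C))
  refine squeeze_zero (fun x => by positivity) (fun x => ?_) hdecay
  calc exp (-c * f x) * dist x x₀ ≤ exp (-c * (a * dist x x₀ - C)) * dist x x₀ := by
        gcongr ?_ * _
        exact exp_le_exp.2 (by nlinarith [hf x])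
    _ = exp (c * C) * (dist x x₀ ^ (1 : ℝ) * exp (-(c * a) * dist x x₀)) := by
        rw [rpow_one, mul_left_comm, ← exp_add]
        ring_nf

theorem log_sum_exp_influence_redescending_general
    (L : ℕ)
    (φ : Fin L → ℝ → ℝ)
    (hφconv : ∀ l, StrictConvexOn ℝ Set.univ (φ l))
    (θ : EuclideanSpace ℝ (Fin L))
    (d : Fin L → ℝ → ℝ)
    (hd : ∀ l xl, d l xl = φ l xl - φ l (θ l) - (xl - θ l) * deriv (φ l) (θ l))
    (hdtop : ∀ l, Tendsto (d l) (Filter.cocompact ℝ) atTop)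
    (β : ℝ) (hβ : β < 1)
    (A : EuclideanSpace ℝ (Fin L) →ₗ[ℝ] EuclideanSpace ℝ (Fin L)) :
    Tendsto (fun x : EuclideanSpace ℝ (Fin L) =>
        Real.exp (-(1 - β) * ((∑ l, d l (x l)))) * ‖A (x - θ)‖)
      (Filter.cocompact (EuclideanSpace ℝ (Fin L))) (𝓝 0) := by
  have hconv : ∀ l, ConvexOn ℝ univ (d l) := fun l =>
    ((hφconv l).convexOn.sub_affine (θ l) _).congr fun t _ => (hd l t).symm
  -- finitely many `𝓝[>] 0`-eventualities share a positive witness: a slope good for every `l`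
  obtain ⟨a, hC, ha⟩ := ((eventually_all.2 fun l =>
    (hconv l).eventually_exists_mul_dist_sub_le (hdtop l) (θ l)).and self_mem_nhdsWithin).exists
  choose C hC using hC
  have hdecay := (tendsto_exp_neg_mul_mul_dist_cocompact ha (sub_pos.2 hβ)
    (EuclideanSpace.mul_dist_sub_sum_le_sum (le_of_lt ha) hC)).const_mul
    ‖LinearMap.toContinuousLinearMap A‖
  rw [mul_zero] at hdecay
  refine squeeze_zero (fun x => by positivity) (fun x => ?_) hdecay
  calc exp (-(1 - β) * ∑ l, d l (x l)) * ‖A (x - θ)‖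
      ≤ exp (-(1 - β) * ∑ l, d l (x l)) * (‖LinearMap.toContinuousLinearMap A‖ * dist x θ) := by
        gcongr
        exact dist_eq_norm x θ ▸ (LinearMap.toContinuousLinearMap A).le_opNorm (x - θ)
    _ = _ := by ring

/-- Redescending influence function for the log-sum-exp objective with `β < 1`:
for an additive Bregman divergence on `ℝ^L` whose coordinate divergences blow up
at infinity, `exp(−(1 − β) d_φ(x, θ)) · ‖A(x − θ)‖ → 0` as `‖x‖ → ∞`. -/
theorem log_sum_exp_influence_redescending
    (L : ℕ) (hL : 1 ≤ L)
    (φ : Fin L → ℝ → ℝ)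
    (hφdiff : ∀ l, Differentiable ℝ (φ l))
    (hφconv : ∀ l, StrictConvexOn ℝ Set.univ (φ l))
    (θ : EuclideanSpace ℝ (Fin L))
    (d : Fin L → ℝ → ℝ)
    (hd : ∀ l xl, d l xl = φ l xl - φ l (θ l) - (xl - θ l) * deriv (φ l) (θ l))
    (hdtop : ∀ l, Tendsto (d l) (Filter.cocompact ℝ) atTop)
    (β : ℝ) (hβ : β < 1)
    (A : EuclideanSpace ℝ (Fin L) →ₗ[ℝ] EuclideanSpace ℝ (Fin L)) :
    Tendsto (fun x : EuclideanSpace ℝ (Fin L) =>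
        Real.exp (-(1 - β) * ((∑ l, d l (x l)))) * ‖A (x - θ)‖)
      (Filter.cocompact (EuclideanSpace ℝ (Fin L))) (𝓝 0) :=
  log_sum_exp_influence_redescending_general L φ hφconv θ d hd hdtop β hβ A
end

section
/- (Robustness classification for α-divergence with α < 1, α ≠ 0, under the power mean.) Fix real α with α < 1 and α ≠ 0, θ > 0, a ≥ 0, and define d_α(x, θ) = (x^α + (α − 1)θ^α − α x θ^{α−1})/(α(α − 1)) for x > 0. Then, as x → +∞: (i) if β < 0, then (x − θ)/(d_α(x, θ) + a)^{1−β} → 0; (ii) if β = 0, then (x − θ)/(d_α(x, θ) + a) → (1 − α) θ^{1−α} (a finite positive limit); (iii) if β > 0, then (x − θ)/(d_α(x, θ) + a)^{1−β} → +∞. -/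
open Filter Topology

/-!
For `α < 1` the term `x ^ α` is `o(x)`, so `d_α(x, θ)` grows linearly:
`d_α(x, θ) / x → θ ^ (α - 1) / (1 - α)`. Hence `(x - θ) / (d_α(x, θ) + a)` tends to the
reciprocal `(1 - α) θ ^ (1 - α)`, and since
`(x - θ) / (d + a) ^ (1 - β) = (x - θ) / (d + a) * (d + a) ^ β` with `d + a → ∞`,
the sign of `β` decides between the limits `0`, finite and `∞`.
-/

noncomputable def alphaDivergence (α θ x : ℝ) : ℝ :=
  (x ^ α + (α - 1) * θ ^ α - α * x * θ ^ (α - 1)) / (α * (α - 1))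

lemma alphaDivergence_div_self {α θ x : ℝ} (hα0 : α ≠ 0) (hα1 : α ≠ 1) (hx : 0 < x) :
    alphaDivergence α θ x / x =
      x ^ (α - 1) / (α * (α - 1)) + θ ^ α / α * x⁻¹ + θ ^ (α - 1) / (1 - α) := by
  have hα1' : α - 1 ≠ 0 := sub_ne_zero.2 hα1
  have hα1'' : 1 - α ≠ 0 := sub_ne_zero.2 hα1.symm
  rw [alphaDivergence, Real.rpow_sub hx, Real.rpow_one]
  field_simp
  ring

lemma tendsto_alphaDivergence_div_self {α : ℝ} (hα : α < 1) (hα0 : α ≠ 0) (θ : ℝ) :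
    Tendsto (fun x => alphaDivergence α θ x / x) atTop (𝓝 (θ ^ (α - 1) / (1 - α))) := by
  have hpow : Tendsto (fun x : ℝ => x ^ (α - 1)) atTop (𝓝 0) := by
    simpa using tendsto_rpow_neg_atTop (sub_pos.2 hα)
  have hsum := ((hpow.div_const (α * (α - 1))).add
    (tendsto_inv_atTop_zero.const_mul (θ ^ α / α))).add_const (θ ^ (α - 1) / (1 - α))
  rw [zero_div, mul_zero, zero_add, zero_add] at hsum
  refine hsum.congr' ?_
  filter_upwards [eventually_gt_atTop 0] with x hx
  rw [alphaDivergence_div_self hα0 hα.ne hx]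

lemma tendsto_add_const_div_self {f : ℝ → ℝ} {c : ℝ}
    (hf : Tendsto (fun x => f x / x) atTop (𝓝 c)) (a : ℝ) :
    Tendsto (fun x => (f x + a) / x) atTop (𝓝 c) := by
  simpa only [add_div, add_zero, id] using hf.add (tendsto_const_nhds.div_atTop tendsto_id)

lemma tendsto_sub_const_div_self (θ : ℝ) :
    Tendsto (fun x : ℝ => (x - θ) / x) atTop (𝓝 1) := by
  have h := (tendsto_const_nhds (x := (1 : ℝ))).sub
    ((tendsto_const_nhds (x := θ)).div_atTop tendsto_id)
  rw [sub_zero] at h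
  refine h.congr' ?_
  filter_upwards [eventually_gt_atTop 0] with x hx
  rw [sub_div, div_self hx.ne', id]

lemma tendsto_div_of_tendsto_div_self {f g : ℝ → ℝ} {a b : ℝ}
    (hf : Tendsto (fun x => f x / x) atTop (𝓝 a))
    (hg : Tendsto (fun x => g x / x) atTop (𝓝 b)) (hb : b ≠ 0) : Tendsto (fun x => f x / g x) atTop (𝓝 (a / b)) := by
  refine (hf.div hg hb).congr' ?_
  filter_upwards [eventually_ne_atTop 0] with x hx
  rw [Pi.div_apply, div_div_div_cancel_right₀ hx]

lemma div_rpow_one_sub {y : ℝ} (hy : 0 < y) (x β : ℝ) :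
    x / y ^ (1 - β) = x / y * y ^ β := by
  rw [Real.rpow_sub hy, Real.rpow_one, div_div_eq_mul_div, mul_div_right_comm]

namespace Filter.Tendsto

variable {ι : Type*} {l : Filter ι} {f g : ι → ℝ} {L β : ℝ}

lemma div_rpow_one_sub_of_neg (hfg : Tendsto (fun i => f i / g i) l (𝓝 L))
    (hg : Tendsto g l atTop) (hβ : β < 0) :
    Tendsto (fun i => f i / g i ^ (1 - β)) l (𝓝 0) := by
  have hpow : Tendsto (fun i => g i ^ β) l (𝓝 0) := by
    simpa [Function.comp_def] using (tendsto_rpow_neg_atTop (neg_pos.2 hβ)).comp hg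
  refine (mul_zero L ▸ hfg.mul hpow).congr' ?_
  filter_upwards [hg.eventually_gt_atTop 0] with i hi
  rw [div_rpow_one_sub hi]

lemma div_rpow_one_sub_of_pos (hfg : Tendsto (fun i => f i / g i) l (𝓝 L)) (hL : 0 < L)
    (hg : Tendsto g l atTop) (hβ : 0 < β) :
    Tendsto (fun i => f i / g i ^ (1 - β)) l atTop := by
  refine (hfg.pos_mul_atTop hL ((tendsto_rpow_atTop hβ).comp hg)).congr' ?_
  filter_upwards [hg.eventually_gt_atTop 0] with i hi
  rw [div_rpow_one_sub hi, Function.comp_apply]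

end Filter.Tendsto

lemma one_div_rpow_sub_one_div {α θ : ℝ} (hθ : 0 < θ) :
    1 / (θ ^ (α - 1) / (1 - α)) = (1 - α) * θ ^ (1 - α) := by
  rw [one_div_div, div_eq_mul_inv, ← Real.rpow_neg hθ.le, neg_sub]

theorem alpha_divergence_influence_classification_alpha_lt_one_general
    (α θ a : ℝ) (hα : α < 1) (hα0 : α ≠ 0) (hθ : 0 < θ)
    (d : ℝ → ℝ)
    (hd : ∀ x : ℝ, 0 < x →
      d x = (x ^ α + (α - 1) * θ ^ α - α * x * θ ^ (α - 1)) / (α * (α - 1))) :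
    (∀ β : ℝ, β < 0 →
      Tendsto (fun x : ℝ => (x - θ) / (d x + a) ^ (1 - β)) atTop (𝓝 0)) ∧
    Tendsto (fun x : ℝ => (x - θ) / (d x + a)) atTop (𝓝 ((1 - α) * θ ^ (1 - α))) ∧
    (∀ β : ℝ, 0 < β →
      Tendsto (fun x : ℝ => (x - θ) / (d x + a) ^ (1 - β)) atTop atTop) := by
  have hc : 0 < θ ^ (α - 1) / (1 - α) := div_pos (Real.rpow_pos_of_pos hθ _) (sub_pos.2 hα)
  have hgrowth : Tendsto (fun x => (d x + a) / x) atTop (𝓝 (θ ^ (α - 1) / (1 - α))) := by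
    refine tendsto_add_const_div_self ((tendsto_alphaDivergence_div_self hα hα0 θ).congr' ?_) a
    filter_upwards [eventually_gt_atTop 0] with x hx
    rw [hd x hx, alphaDivergence]
  have htop : Tendsto (fun x => d x + a) atTop atTop := tendsto_id.num hc hgrowth
  have hratio :
      Tendsto (fun x => (x - θ) / (d x + a)) atTop (𝓝 ((1 - α) * θ ^ (1 - α))) := by
    rw [← one_div_rpow_sub_one_div hθ]
    exact tendsto_div_of_tendsto_div_self (tendsto_sub_const_div_self θ) hgrowth hc.ne'
  have hlim_pos : 0 < (1 - α) * θ ^ (1 - α) :=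
    mul_pos (sub_pos.2 hα) (Real.rpow_pos_of_pos hθ _)
  exact ⟨fun β hβ => hratio.div_rpow_one_sub_of_neg htop hβ, hratio,
    fun β hβ => hratio.div_rpow_one_sub_of_pos hlim_pos htop hβ⟩

/-- Robustness classification for the α-divergence with `α < 1`, `α ≠ 0`, under
the power mean: as `x → ∞`, the influence factor `(x − θ)/(d_α(x, θ) + a)^(1−β)`
is redescending for `β < 0`, bounded with limit `(1 − α) θ^(1−α)` for `β = 0`,
and divergent for `β > 0`. -/
theorem alpha_divergence_influence_classification_alpha_lt_one
    (α θ a : ℝ) (hα : α < 1) (hα0 : α ≠ 0) (hθ : 0 < θ) (ha : 0 ≤ a)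
    (d : ℝ → ℝ)
    (hd : ∀ x : ℝ, 0 < x →
      d x = (x ^ α + (α - 1) * θ ^ α - α * x * θ ^ (α - 1)) / (α * (α - 1))) :
    (∀ β : ℝ, β < 0 →
      Tendsto (fun x : ℝ => (x - θ) / (d x + a) ^ (1 - β)) atTop (𝓝 0)) ∧
    Tendsto (fun x : ℝ => (x - θ) / (d x + a)) atTop (𝓝 ((1 - α) * θ ^ (1 - α))) ∧
    (∀ β : ℝ, 0 < β →
      Tendsto (fun x : ℝ => (x - θ) / (d x + a) ^ (1 - β)) atTop atTop) :=
  alpha_divergence_influence_classification_alpha_lt_one_general α θ a hα hα0 hθ d hd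
end

section
/- (Robustness classification for the Itakura–Saito divergence under the power mean.) Fix θ > 0, a ≥ 0, and define the Itakura–Saito divergence d(x, θ) = x/θ − ln(x/θ) − 1 for x > 0. Then, as x → +∞: (i) if β < 0, then (x − θ)/(d(x, θ) + a)^{1−β} → 0; (ii) if β = 0, then (x − θ)/(d(x, θ) + a) → θ (a finite positive limit); (iii) if β > 0, then (x − θ)/(d(x, θ) + a)^{1−β} → +∞. -/
/-!
Since `log x = o(x)`, the shifted divergence `d(x, θ) + a` is asymptotically equivalent to `x / θ`,
so the influence `(x − θ)/(d(x, θ) + a)^(1−β)` is asymptotically equivalent to `θ^(1−β) x^β`,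
whose limit at `+∞` is `0`, `θ` or `+∞` according to the sign of `β`.
-/

open Filter Topology

open Asymptotics Real

lemma Asymptotics.IsEquivalent.rpow_of_eventually_nonneg {α : Type*} {l : Filter α}
    {u v : α → ℝ} (hv : ∀ᶠ x in l, 0 ≤ v x) (h : u ~[l] v) (r : ℝ) :
    u ^ r ~[l] v ^ r := by
  have hv' : v =ᶠ[l] fun x => max (v x) 0 := by
    filter_upwards [hv] with x hx using (max_eq_left hx).symm
  refine ((h.congr_right hv').rpow (fun x => le_max_right _ _)).congr_right ?_
  filter_upwards [hv] with x hx
  simp only [Pi.pow_apply, Pi.zero_apply, max_eq_left hx]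

lemma isEquivalent_sub_log_add_const_atTop (c : ℝ) :
    (fun y => y - log y + c) ~[atTop] id :=
  (IsEquivalent.refl.sub_isLittleO isLittleO_log_id_atTop).add_isLittleO
    (isLittleO_const_id_atTop c)

lemma isEquivalent_div_sub_log_div_add_const_atTop {θ : ℝ} (hθ : 0 < θ) (c : ℝ) :
    (fun x => x / θ - log (x / θ) + c) ~[atTop] fun x => x / θ :=
  (isEquivalent_sub_log_add_const_atTop c).comp_tendsto (tendsto_id.atTop_div_const hθ)

lemma isEquivalent_sub_div_rpow_of_isEquivalent_div {θ : ℝ} (hθ : 0 < θ) {g : ℝ → ℝ}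
    (hg : g ~[atTop] fun x => x / θ) (c β : ℝ) :
    (fun x => (x - c) / g x ^ (1 - β)) ~[atTop] fun x => θ ^ (1 - β) * x ^ β := by
  have hnum : (fun x : ℝ => x - c) ~[atTop] id :=
    IsEquivalent.refl.sub_isLittleO (isLittleO_const_id_atTop c)
  have hden := hg.rpow_of_eventually_nonneg
    (by filter_upwards [eventually_ge_atTop 0] with x hx using div_nonneg hx hθ.le) (1 - β)
  refine (hnum.div hden).congr_right ?_
  filter_upwards [eventually_gt_atTop 0] with x hx
  simp only [Pi.div_apply, Pi.pow_apply, id]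
  rw [div_rpow hx.le hθ.le, rpow_sub hx, rpow_one, rpow_sub hθ, rpow_one]
  field_simp

theorem itakura_saito_influence_classification_general
    (θ a : ℝ) (hθ : 0 < θ)
    (d : ℝ → ℝ)
    (hd : ∀ x : ℝ, 0 < x → d x = x / θ - Real.log (x / θ) - 1) :
    (∀ β : ℝ, β < 0 →
      Tendsto (fun x : ℝ => (x - θ) / (d x + a) ^ (1 - β)) atTop (𝓝 0)) ∧
    Tendsto (fun x : ℝ => (x - θ) / (d x + a)) atTop (𝓝 θ) ∧
    (∀ β : ℝ, 0 < β →
      Tendsto (fun x : ℝ => (x - θ) / (d x + a) ^ (1 - β)) atTop atTop) := by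
  have hg : (fun x => d x + a) ~[atTop] fun x => x / θ := by
    refine (isEquivalent_div_sub_log_div_add_const_atTop hθ (a - 1)).congr_left ?_
    filter_upwards [eventually_gt_atTop 0] with x hx
    rw [hd x hx]
    ring
  have key := isEquivalent_sub_div_rpow_of_isEquivalent_div hθ hg θ
  refine ⟨fun β hβ => ?_, ?_, fun β hβ => ?_⟩
  · refine (key β).symm.tendsto_nhds ?_
    simpa using (tendsto_rpow_neg_atTop (neg_pos.2 hβ)).const_mul (θ ^ (1 - β))
  · simpa using (key 0).symm.tendsto_nhds (c := θ) (by simp)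
  · exact (key β).symm.tendsto_atTop
      ((tendsto_rpow_atTop hβ).const_mul_atTop (rpow_pos_of_pos hθ _))

/-- Robustness classification for the Itakura–Saito divergence under the power
mean: as `x → ∞`, the influence factor `(x − θ)/(d(x, θ) + a)^(1−β)` is
redescending for `β < 0`, bounded with limit `θ` for `β = 0`, and divergent for
`β > 0`. -/
theorem itakura_saito_influence_classification
    (θ a : ℝ) (hθ : 0 < θ) (ha : 0 ≤ a)
    (d : ℝ → ℝ)
    (hd : ∀ x : ℝ, 0 < x → d x = x / θ - Real.log (x / θ) - 1) :
    (∀ β : ℝ, β < 0 →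
      Tendsto (fun x : ℝ => (x - θ) / (d x + a) ^ (1 - β)) atTop (𝓝 0)) ∧
    Tendsto (fun x : ℝ => (x - θ) / (d x + a)) atTop (𝓝 θ) ∧
    (∀ β : ℝ, 0 < β →
      Tendsto (fun x : ℝ => (x - θ) / (d x + a) ^ (1 - β)) atTop atTop) :=
  itakura_saito_influence_classification_general θ a hθ d hd
end

section
/- (Robustness classification for the generalized Kullback–Leibler divergence under the power mean.) Fix θ > 0, a ≥ 0, and define d(x, θ) = x ln(x/θ) − (x − θ) for x > 0. Then, as x → +∞: (i) if β ≤ 0, then (x − θ)/(d(x, θ) + a)^{1−β} → 0 (the influence is redescending); (ii) if β > 0, then (x − θ)/(d(x, θ) + a)^{1−β} → +∞ (the influence is divergent). -/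
open Filter Topology Real Asymptotics

/-!
Write `D x = d(x, θ) + a = x ln(x/θ) − (x − θ) + a`. Since `D x / (x − θ) ≥ ln(x/θ) − 1 − |a|`,
the divergence grows strictly faster than `x − θ`, which settles `β ≤ 0`: the influence is at
most `(x − θ) / D x`. On the other hand `ln(x/θ) = o(x^ε)` gives `D x ≤ x^(1+ε)`, so for
`0 < β < 1` the denominator `D^(1−β)` is at most `x^q` for some `q < 1`, and for `β ≥ 1` it is at
most `1`; either way the influence grows at least like `x^(1−q)`.
-/

noncomputable def genKL (θ x : ℝ) : ℝ := x * log (x / θ) - (x - θ)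

section Generic

variable {α : Type*} {l : Filter α} {u v : α → ℝ}

theorem tendsto_atTop_of_tendsto_div_atTop (hu : Tendsto u l atTop)
    (huv : Tendsto (fun x => v x / u x) l atTop) : Tendsto v l atTop := by
  refine (huv.atTop_mul_atTop₀ hu).congr' ?_
  filter_upwards [hu.eventually_gt_atTop 0] with x hx
  exact div_mul_cancel₀ _ hx.ne'

theorem tendsto_div_rpow_nhds_zero_of_tendsto_div_atTop {c : ℝ} (hc : 1 ≤ c)
    (hu : Tendsto u l atTop) (huv : Tendsto (fun x => v x / u x) l atTop) :
    Tendsto (fun x => u x / v x ^ c) l (𝓝 0) := by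
  have hv := tendsto_atTop_of_tendsto_div_atTop hu huv
  refine squeeze_zero' ?_ ?_ huv.inv_tendsto_atTop
  · filter_upwards [hu.eventually_ge_atTop 0, hv.eventually_ge_atTop 0] with x hux hvx
    positivity
  · filter_upwards [hu.eventually_ge_atTop 0, hv.eventually_ge_atTop 1] with x hux hvx
    rw [Pi.inv_apply, inv_div]
    gcongr
    simpa using rpow_le_rpow_of_exponent_le hvx hc

end Generic

theorem tendsto_sub_div_atTop_of_le_rpow {θ q : ℝ} {v : ℝ → ℝ} (hq : q < 1)
    (hv : ∀ᶠ x in atTop, 0 < v x ∧ v x ≤ x ^ q) :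
    Tendsto (fun x => (x - θ) / v x) atTop atTop := by
  refine tendsto_atTop_mono' atTop ?_
    ((tendsto_rpow_atTop (sub_pos.2 hq)).atTop_div_const two_pos)
  filter_upwards [hv, eventually_gt_atTop 0, eventually_ge_atTop (2 * θ)]
    with x ⟨hv0, hvx⟩ hx hxθ
  calc x ^ (1 - q) / 2 = (x / 2) / x ^ q := by rw [rpow_sub hx, rpow_one]; ring
    _ ≤ (x - θ) / x ^ q := by gcongr; linarith
    _ ≤ (x - θ) / v x := by gcongr; linarith

theorem eventually_log_div_le_rpow {θ ε : ℝ} (hθ : θ ≠ 0) (hε : 0 < ε) :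
    ∀ᶠ x in atTop, log (x / θ) ≤ x ^ ε := by
  have hconst : (fun _ : ℝ => log θ) =o[atTop] (· ^ ε) :=
    isLittleO_const_left.2 <| Or.inr <|
      tendsto_norm_atTop_atTop.comp (tendsto_rpow_atTop hε)
  have hlittle : (fun x => log (x / θ)) =o[atTop] (· ^ ε) := by
    refine ((isLittleO_log_rpow_atTop hε).sub hconst).congr' ?_ EventuallyEq.rfl
    filter_upwards [eventually_ne_atTop 0] with x hx
    exact (log_div hx hθ).symm
  filter_upwards [hlittle.eventuallyLE, eventually_ge_atTop 0] with x h hx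
  rw [norm_of_nonneg (rpow_nonneg hx ε)] at h
  exact (le_abs_self _).trans h

section GenKL

variable {θ : ℝ} (a : ℝ)

theorem tendsto_genKL_add_div_sub_atTop (hθ : 0 < θ) :
    Tendsto (fun x => (genKL θ x + a) / (x - θ)) atTop atTop := by
  have hlog : Tendsto (fun x => log (x / θ)) atTop atTop :=
    tendsto_log_atTop.comp (tendsto_id.atTop_div_const hθ)
  refine tendsto_atTop_mono' atTop ?_ (tendsto_atTop_add_const_right _ (-1 - |a|) hlog)
  filter_upwards [hlog.eventually_ge_atTop 0, eventually_ge_atTop (θ + 1)] with x hl hx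
  rw [le_div_iff₀ (by linarith), genKL]
  have hslack : 0 ≤ θ * log (x / θ) + a + (x - θ) * |a| := by
    nlinarith [neg_abs_le a, abs_nonneg a, mul_nonneg hθ.le hl]
  nlinarith

theorem tendsto_genKL_add_atTop (hθ : 0 < θ) : Tendsto (fun x => genKL θ x + a) atTop atTop :=
  tendsto_atTop_of_tendsto_div_atTop (tendsto_atTop_add_const_right _ (-θ) tendsto_id)
    (tendsto_genKL_add_div_sub_atTop a hθ)

theorem eventually_genKL_add_le_rpow (hθ : θ ≠ 0) {ε : ℝ} (hε : 0 < ε) :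
    ∀ᶠ x in atTop, genKL θ x + a ≤ x ^ (1 + ε) := by
  filter_upwards [eventually_log_div_le_rpow hθ hε, eventually_gt_atTop 0,
    eventually_ge_atTop (θ + a)] with x hlog hx hxa
  calc genKL θ x + a ≤ x * x ^ ε := by
        rw [genKL]; nlinarith [mul_le_mul_of_nonneg_left hlog hx.le]
    _ = x ^ (1 + ε) := by rw [rpow_add hx, rpow_one]

theorem exists_eventually_genKL_add_rpow_le_rpow (hθ : 0 < θ) {β : ℝ} (hβ : 0 < β) :
    ∃ q : ℝ, q < 1 ∧ ∀ᶠ x in atTop,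
      0 < (genKL θ x + a) ^ (1 - β) ∧ (genKL θ x + a) ^ (1 - β) ≤ x ^ q := by
  have hone := (tendsto_genKL_add_atTop a hθ).eventually_ge_atTop 1
  rcases le_or_gt 1 β with hβ1 | hβ1
  · refine ⟨0, one_pos, ?_⟩
    filter_upwards [hone] with x hx
    rw [rpow_zero]
    exact ⟨rpow_pos_of_pos (by linarith) _, rpow_le_one_of_one_le_of_nonpos hx (by linarith)⟩
  · refine ⟨(1 + β / 2) * (1 - β), by nlinarith, ?_⟩
    filter_upwards [hone, eventually_genKL_add_le_rpow a hθ.ne' (half_pos hβ),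
      eventually_gt_atTop 0] with x hx hle hxpos
    refine ⟨rpow_pos_of_pos (by linarith) _, ?_⟩
    calc (genKL θ x + a) ^ (1 - β) ≤ (x ^ (1 + β / 2)) ^ (1 - β) :=
          rpow_le_rpow (by linarith) hle (by linarith)
      _ = x ^ ((1 + β / 2) * (1 - β)) := by rw [← rpow_mul hxpos.le]

end GenKL

theorem generalized_KL_influence_classification_general
    (θ a : ℝ) (hθ : 0 < θ)
    (d : ℝ → ℝ)
    (hd : ∀ x : ℝ, 0 < x → d x = x * Real.log (x / θ) - (x - θ)) :
    (∀ β : ℝ, β ≤ 0 →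
      Tendsto (fun x : ℝ => (x - θ) / (d x + a) ^ (1 - β)) atTop (𝓝 0)) ∧
    (∀ β : ℝ, 0 < β →
      Tendsto (fun x : ℝ => (x - θ) / (d x + a) ^ (1 - β)) atTop atTop) := by
  have hd_eq (c : ℝ) : (fun x => (x - θ) / (genKL θ x + a) ^ c) =ᶠ[atTop]
      fun x => (x - θ) / (d x + a) ^ c := by
    filter_upwards [eventually_gt_atTop 0] with x hx
    rw [hd x hx, genKL]
  refine ⟨fun β hβ => ?_, fun β hβ => ?_⟩
  · exact (tendsto_div_rpow_nhds_zero_of_tendsto_div_atTop (by linarith)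
      (tendsto_atTop_add_const_right _ (-θ) tendsto_id)
      (tendsto_genKL_add_div_sub_atTop a hθ)).congr' (hd_eq _)
  · obtain ⟨q, hq, hle⟩ := exists_eventually_genKL_add_rpow_le_rpow a hθ hβ
    exact (tendsto_sub_div_atTop_of_le_rpow hq hle).congr' (hd_eq _)

/-- Robustness classification for the generalized Kullback–Leibler divergence
under the power mean: as `x → ∞`, the influence factor
`(x − θ)/(d(x, θ) + a)^(1−β)` is redescending for `β ≤ 0` and divergent for
`β > 0`. -/
theorem generalized_KL_influence_classification
    (θ a : ℝ) (hθ : 0 < θ) (ha : 0 ≤ a)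
    (d : ℝ → ℝ)
    (hd : ∀ x : ℝ, 0 < x → d x = x * Real.log (x / θ) - (x - θ)) :
    (∀ β : ℝ, β ≤ 0 →
      Tendsto (fun x : ℝ => (x - θ) / (d x + a) ^ (1 - β)) atTop (𝓝 0)) ∧
    (∀ β : ℝ, 0 < β →
      Tendsto (fun x : ℝ => (x - θ) / (d x + a) ^ (1 - β)) atTop atTop) :=
  generalized_KL_influence_classification_general θ a hθ d hd
end

section
/- (Influence limits for the exp-loss Bregman divergence under the power mean.) Fix θ ∈ ℝ, a ≥ 0, and define d(x, θ) = e^x − e^θ − e^θ(x − θ) for x ∈ ℝ (the Bregman divergence generated by φ(x) = e^x). Then: (i) for every β < 1, lim_{x → +∞} (x − θ)/(d(x, θ) + a)^{1−β} = 0; (ii) for β = 0, lim_{x → −∞} (x − θ)/(d(x, θ) + a) = −e^{−θ} (a finite nonzero limit, so the influence is bounded but not redescending in this direction); (iii) for every β < 0, lim_{x → −∞} (x − θ)/(d(x, θ) + a)^{1−β} = 0. -/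
/-!
As `x → +∞` the divergence is asymptotic to `e^x`, and `(e^x)^(1-β) = e^((1-β)x)` outgrows the
affine numerator `x - θ`. As `x → -∞` it is asymptotic to `e^θ (-x)`, so `(x - θ)/(d + a)` tends
to `-e^(-θ)`; for `β < 0` the extra factor `(d + a)^β` tends to `0` because `d + a → +∞`.
-/

open Filter Topology Asymptotics Real

theorem isLittleO_affine_exp_mul_atTop (p q : ℝ) {b : ℝ} (hb : 0 < b) :
    (fun x : ℝ => p * x + q) =o[atTop] fun x => exp (b * x) := by
  simpa using ((isLittleO_pow_exp_pos_mul_atTop 1 hb).const_mul_left p).add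
    ((isLittleO_pow_exp_pos_mul_atTop 0 hb).const_mul_left q)

theorem tendsto_div_rpow_of_tendsto_div_of_tendsto_atTop {α : Type*} {l : Filter α}
    {f g : α → ℝ} {L s : ℝ} (hfg : Tendsto (fun x => f x / g x) l (𝓝 L))
    (hg : Tendsto g l atTop) (hs : 1 < s) :
    Tendsto (fun x => f x / g x ^ s) l (𝓝 0) := by
  have hpow : Tendsto (fun x => g x ^ (-(s - 1))) l (𝓝 0) :=
    (tendsto_rpow_neg_atTop (by linarith)).comp hg
  simpa using (hfg.mul hpow).congr' <| (hg.eventually_gt_atTop 0).mono fun x hx => by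
    rw [rpow_neg hx.le, rpow_sub hx, rpow_one]
    field_simp

noncomputable def expBregman (θ x : ℝ) : ℝ := exp x - exp θ - exp θ * (x - θ)

theorem expBregman_add_const_isEquivalent_exp_atTop (θ a : ℝ) :
    (fun x => expBregman θ x + a) ~[atTop] exp := by
  have := (IsEquivalent.refl (u := exp) (l := atTop)).add_isLittleO
    (by simpa using isLittleO_affine_exp_mul_atTop (-exp θ) (exp θ * θ - exp θ + a) one_pos)
  refine this.congr_left (Eventually.of_forall fun x => ?_)
  simp only [expBregman, Pi.add_apply]
  ring

theorem expBregman_add_const_isEquivalent_atBot (θ a : ℝ) :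
    (fun x => expBregman θ x + a) ~[atBot] fun x => exp θ * -x := by
  have hlin : Tendsto (fun x : ℝ => exp θ * -x) atBot atTop :=
    tendsto_neg_atBot_atTop.const_mul_atTop (exp_pos θ)
  have hbdd : (fun x => exp x + (exp θ * θ - exp θ + a)) =O[atBot] fun _ => (1 : ℝ) :=
    (tendsto_exp_atBot.add_const _).isBigO_one ℝ
  have hsmall := hbdd.trans_isLittleO
    ((isLittleO_one_left_iff ℝ).2 (tendsto_norm_atTop_atTop.comp hlin))
  refine (hsmall.add_isEquivalent IsEquivalent.refl).congr_left
    (Eventually.of_forall fun x => ?_)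
  simp only [expBregman, Pi.add_apply]
  ring

theorem tendsto_div_rpow_expBregman_add_const_atTop (θ a : ℝ) {s : ℝ} (hs : 0 < s) :
    Tendsto (fun x => (x - θ) / (expBregman θ x + a) ^ s) atTop (𝓝 0) := by
  have hequiv : (fun x => (x - θ) / (expBregman θ x + a) ^ s) ~[atTop]
      fun x => (x - θ) / exp (s * x) := by
    refine (IsEquivalent.refl.div ((expBregman_add_const_isEquivalent_exp_atTop θ a).rpow
      (fun x => (exp_pos x).le))).congr_right (Eventually.of_forall fun x => ?_)
    simp [← exp_mul, mul_comm]
  refine hequiv.symm.tendsto_nhds ?_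
  simpa [sub_eq_add_neg] using (isLittleO_affine_exp_mul_atTop 1 (-θ) hs).tendsto_div_nhds_zero

theorem tendsto_div_expBregman_add_const_atBot (θ a : ℝ) :
    Tendsto (fun x => (x - θ) / (expBregman θ x + a)) atBot (𝓝 (-exp (-θ))) := by
  have hlin : (fun x : ℝ => x - θ) ~[atBot] id :=
    IsEquivalent.refl.add_const_of_norm_tendsto_atTop tendsto_abs_atBot_atTop
  refine IsEquivalent.tendsto_const <|
    (hlin.div (expBregman_add_const_isEquivalent_atBot θ a)).congr_right ?_
  filter_upwards [eventually_ne_atBot 0] with x hx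
  simp only [mul_neg, Pi.div_apply, id_eq, exp_neg, Function.const_apply]
  field_simp

theorem exp_loss_influence_limits_general
    (θ a : ℝ)
    (d : ℝ → ℝ)
    (hd : ∀ x : ℝ, d x = Real.exp x - Real.exp θ - Real.exp θ * (x - θ)) :
    (∀ β : ℝ, β < 1 →
      Tendsto (fun x : ℝ => (x - θ) / (d x + a) ^ (1 - β)) atTop (𝓝 0)) ∧
    Tendsto (fun x : ℝ => (x - θ) / (d x + a)) atBot (𝓝 (-Real.exp (-θ))) ∧
    (∀ β : ℝ, β < 0 →
      Tendsto (fun x : ℝ => (x - θ) / (d x + a) ^ (1 - β)) atBot (𝓝 0)) := by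
  obtain rfl : d = expBregman θ := funext hd
  have hdiv := tendsto_div_expBregman_add_const_atBot θ a
  have hden : Tendsto (fun x => expBregman θ x + a) atBot atTop :=
    (expBregman_add_const_isEquivalent_atBot θ a).symm.tendsto_atTop
      (tendsto_neg_atBot_atTop.const_mul_atTop (exp_pos θ))
  exact ⟨fun β hβ => tendsto_div_rpow_expBregman_add_const_atTop θ a (by linarith), hdiv,
    fun β hβ => tendsto_div_rpow_of_tendsto_div_of_tendsto_atTop hdiv hden (by linarith)⟩

/-- Influence limits for the exp-loss Bregman divergence
`d(x, θ) = e^x − e^θ − e^θ(x − θ)` under the power mean: the influence factor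
`(x − θ)/(d(x, θ) + a)^(1−β)` tends to `0` as `x → +∞` for every `β < 1`;
as `x → −∞` it tends to `−e^{−θ}` when `β = 0` and to `0` for every `β < 0`. -/
theorem exp_loss_influence_limits
    (θ a : ℝ) (ha : 0 ≤ a)
    (d : ℝ → ℝ)
    (hd : ∀ x : ℝ, d x = Real.exp x - Real.exp θ - Real.exp θ * (x - θ)) :
    (∀ β : ℝ, β < 1 →
      Tendsto (fun x : ℝ => (x - θ) / (d x + a) ^ (1 - β)) atTop (𝓝 0)) ∧
    Tendsto (fun x : ℝ => (x - θ) / (d x + a)) atBot (𝓝 (-Real.exp (-θ))) ∧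
    (∀ β : ℝ, β < 0 →
      Tendsto (fun x : ℝ => (x - θ) / (d x + a) ^ (1 - β)) atBot (𝓝 0)) :=
  exp_loss_influence_limits_general θ a d hd
end

section
/- (Redescending influence for the total Bregman divergence; redescending direction of the total-Bregman robustness theorem.) Let E be a finite-dimensional real inner product space, φ: E → ℝ differentiable and strictly convex, c > 0, θ ∈ E, and tBD(x, θ) = d_φ(θ, x)/√(1 + c²‖∇φ(x)‖²) with d_φ(θ, x) = φ(θ) − φ(x) − ⟨θ − x, ∇φ(x)⟩. Let f: [0, ∞) → ℝ be differentiable with f' nonnegative, nonincreasing, and lim_{z→∞} f'(z) = 0. Assume tBD(x, θ) → ∞ as ‖x‖ → ∞. Then lim_{‖x‖→∞} f'(tBD(x, θ)) · ‖∇φ(x) − ∇φ(θ)‖ / √(1 + c²‖∇φ(x)‖²) = 0; that is, the influence function is redescending. -/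
open scoped RealInnerProductSpace
open Filter Topology

/-! The factor `‖∇φ(x) − ∇φ(θ)‖/√(1 + c²‖∇φ(x)‖²)` is bounded by `1/c + ‖∇φ(θ)‖` uniformly in
`x`, while `f'(tBD(x, θ)) → 0` because `tBD(x, θ) → ∞` and `f' → 0` at infinity; a sequence
tending to `0` times a bounded one tends to `0`. -/

/-- The total Bregman divergence
`tBD(x, θ) = (φ(θ) − φ(x) − ⟨θ − x, ∇φ(x)⟩)/√(1 + c²‖∇φ(x)‖²)`. -/
noncomputable def tBD {E : Type*} [NormedAddCommGroup E] [InnerProductSpace ℝ E]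
    [CompleteSpace E] (φ : E → ℝ) (c : ℝ) (x θ : E) : ℝ :=
  (φ θ - φ x - ⟪θ - x, gradient φ x⟫) / Real.sqrt (1 + c ^ 2 * ‖gradient φ x‖ ^ 2)

lemma le_sqrt_one_add_sq_mul_sq_div {c : ℝ} (hc : 0 < c) {r : ℝ} (hr : 0 ≤ r) :
    r ≤ Real.sqrt (1 + c ^ 2 * r ^ 2) / c := by
  rw [le_div_iff₀ hc, ← Real.sqrt_sq (mul_nonneg hr hc.le)]
  exact Real.sqrt_le_sqrt (by nlinarith)

lemma norm_sub_div_sqrt_one_add_sq_mul_sq_le {G : Type*} [SeminormedAddCommGroup G]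
    {c : ℝ} (hc : 0 < c) (u v : G) :
    ‖u - v‖ / Real.sqrt (1 + c ^ 2 * ‖u‖ ^ 2) ≤ 1 / c + ‖v‖ := by
  set s := Real.sqrt (1 + c ^ 2 * ‖u‖ ^ 2)
  have hs : 1 ≤ s := Real.one_le_sqrt.mpr (by nlinarith [sq_nonneg c, sq_nonneg ‖u‖])
  rw [div_le_iff₀ (one_pos.trans_le hs)]
  calc ‖u - v‖ ≤ ‖u‖ + ‖v‖ := norm_sub_le u v
    _ ≤ s / c + ‖v‖ * s := by
      gcongr
      · exact le_sqrt_one_add_sq_mul_sq_div hc (norm_nonneg u)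
      · exact le_mul_of_one_le_right (norm_nonneg v) hs
    _ = (1 / c + ‖v‖) * s := by ring

theorem total_bregman_influence_redescending_general
    {E : Type*} [NormedAddCommGroup E] [InnerProductSpace ℝ E]
    [FiniteDimensional ℝ E]
    (φ : E → ℝ)
    (c : ℝ) (hc : 0 < c) (θ : E)
    (f : ℝ → ℝ)
    (hf'lim : Tendsto (derivWithin f (Set.Ici 0)) atTop (𝓝 0))
    (htBD : Tendsto (fun x : E => tBD φ c x θ) (Filter.cocompact E) atTop) :
    Tendsto (fun x : E =>
        derivWithin f (Set.Ici 0) (tBD φ c x θ) *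
          (‖gradient φ x - gradient φ θ‖ /
            Real.sqrt (1 + c ^ 2 * ‖gradient φ x‖ ^ 2)))
      (Filter.cocompact E) (𝓝 0) := by
  refine (hf'lim.comp htBD).zero_mul_isBoundedUnder_le <|
    isBoundedUnder_of ⟨1 / c + ‖gradient φ θ‖, fun x => ?_⟩
  rw [Function.comp_apply, Real.norm_of_nonneg (by positivity)]
  exact norm_sub_div_sqrt_one_add_sq_mul_sq_le hc _ _

/-- Redescending influence for the total Bregman divergence: if `f'` is
nonnegative, nonincreasing, and tends to `0` at infinity, and `tBD(x, θ) → ∞`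
as `‖x‖ → ∞`, then the influence-function magnitude
`f'(tBD(x, θ)) ‖∇φ(x) − ∇φ(θ)‖/√(1 + c²‖∇φ(x)‖²)` tends to `0` as `‖x‖ → ∞`. -/
theorem total_bregman_influence_redescending
    {E : Type*} [NormedAddCommGroup E] [InnerProductSpace ℝ E]
    [FiniteDimensional ℝ E]
    (φ : E → ℝ) (hφdiff : Differentiable ℝ φ)
    (hφconv : StrictConvexOn ℝ Set.univ φ)
    (c : ℝ) (hc : 0 < c) (θ : E)
    (f : ℝ → ℝ) (hfdiff : DifferentiableOn ℝ f (Set.Ici 0))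
    (hf'nonneg : ∀ z ∈ Set.Ici (0 : ℝ), 0 ≤ derivWithin f (Set.Ici 0) z)
    (hf'anti : AntitoneOn (derivWithin f (Set.Ici 0)) (Set.Ici 0))
    (hf'lim : Tendsto (derivWithin f (Set.Ici 0)) atTop (𝓝 0))
    (htBD : Tendsto (fun x : E => tBD φ c x θ) (Filter.cocompact E) atTop) :
    Tendsto (fun x : E =>
        derivWithin f (Set.Ici 0) (tBD φ c x θ) *
          (‖gradient φ x - gradient φ θ‖ /
            Real.sqrt (1 + c ^ 2 * ‖gradient φ x‖ ^ 2)))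
      (Filter.cocompact E) (𝓝 0) :=
  total_bregman_influence_redescending_general φ c hc θ f hf'lim htBD
end
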